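/- Define the potential Φ by Φ(⟨⟩) = 0 and Φ(⟨t,a,u⟩) = Φ(t) + p(t,u) + Φ(u), where p(t,u) = max(log_β(β·s(u)/(s(t)+s(u))), 0), β = φ^(φ+2), and φ = (√5+1)/2 is the golden ratio. Then for all weight-biased leftist heaps x and y, the amortized cost of union satisfies A(x,y) = T(x,y) + Φ(x∪y) − Φ(x) − Φ(y) ≤ log_φ(s(x)+s(y)), and for every nonempty weight-biased leftist heap x = ⟨t,a,u⟩ the amortized cost of delete-min satisfies T(t,u) + Φ(t∪u) − Φ(x) ≤ log_φ s(x). -/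

import Mathlib

/-! Write `L = log_β`. Along the merge path every step pays one comparison and replaces the
right child `u` of the winning root `⟨t,a,u⟩` by `z = u ∪ y`. The old pair `(t, u)` releases
potential `p(t,u) ≥ 1 - L(s t + s u) + L(s u)`, while the rebalanced new pair costs at most
`φ · (L(s t + s z) - L(s z))`; the latter is the inequality `β r (1-r)^φ ≤ 1` on `[0,1]`,
i.e. weighted AM-GM with weights `1/φ²` and `1/φ`. Since `s t + s z` at one level is `s z`
at the level above, the terms telescope to `A(x,y) ≤ L(s x) + L(s y) + φ · L(s x + s y - 1)`,
which is at most `(φ+2) · L(s x + s y) = log_φ(s x + s y)`.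
Delete-min is a merge that additionally releases `p(t,u) ≥ 0`. -/

inductive BTree (α : Type) : Type
  | nil : BTree α
  | node : BTree α → α → BTree α → BTree α

namespace BTree

variable {α : Type} [LinearOrder α]

/-- number of nodes -/
def size : BTree α → ℕ
  | nil => 0
  | node t _ u => size t + size u + 1

/-- size plus one -/
def s (x : BTree α) : ℕ := size x + 1

def rank : BTree α → ℕ
  | nil => 0
  | node _ _ u => rank u + 1

/-- minor rank -/
def prank : BTree α → ℕ
  | nil => 0
  | node t _ _ => rank t + 1

/-- `a` is less than or equal to every label of the tree -/
def LeAll (a : α) : BTree α → Prop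
  | nil => True
  | node t b u => a ≤ b ∧ LeAll a t ∧ LeAll a u

/-- heap property: every node's label is ≤ all labels in its subtrees -/
def IsHeap : BTree α → Prop
  | nil => True
  | node t a u => LeAll a t ∧ LeAll a u ∧ IsHeap t ∧ IsHeap u

/-- rank-biased leftist property -/
def RankLeftist : BTree α → Prop
  | nil => True
  | node t _ u => rank u ≤ rank t ∧ RankLeftist t ∧ RankLeftist u

/-- weight-biased leftist property -/
def WeightLeftist : BTree α → Prop
  | nil => True
  | node t _ u => size u ≤ size t ∧ WeightLeftist t ∧ WeightLeftist u

/-- rank-biased balancing -/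
def balR : BTree α → BTree α
  | nil => nil
  | node t a u => if rank u < rank t then node t a u else node u a t

/-- weight-biased balancing -/
def balW : BTree α → BTree α
  | nil => nil
  | node t a u => if size u < size t then node t a u else node u a t

/-- rank-biased merge -/
def mergeR : BTree α → BTree α → BTree α
  | nil, nil => nil
  | nil, node v b w => balR (node v b (mergeR nil w))
  | node t a u, nil => balR (node t a (mergeR u nil))
  | node t a u, node v b w =>
      if a ≤ b then balR (node t a (mergeR u (node v b w)))
      else balR (node v b (mergeR (node t a u) w))
termination_by x y => rank x + rank y
decreasing_by all_goals simp [rank]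

/-- weight-biased merge -/
def mergeW : BTree α → BTree α → BTree α
  | nil, nil => nil
  | nil, node v b w => balW (node v b (mergeW nil w))
  | node t a u, nil => balW (node t a (mergeW u nil))
  | node t a u, node v b w =>
      if a ≤ b then balW (node t a (mergeW u (node v b w)))
      else balW (node v b (mergeW (node t a u) w))
termination_by x y => rank x + rank y
decreasing_by all_goals simp [rank]

/-- number of comparisons used when merging (independent of the balancing strategy) -/
def cost : BTree α → BTree α → ℕ
  | nil, nil => 0
  | nil, node _ _ w => cost nil w + 1
  | node _ _ u, nil => cost u nil + 1
  | node t a u, node v b w =>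
      (if a ≤ b then cost u (node v b w) else cost (node t a u) w) + 1
termination_by x y => rank x + rank y
decreasing_by all_goals simp [rank]

end BTree

/-- the golden ratio φ = (√5 + 1)/2 -/
noncomputable def goldPhi : ℝ := (Real.sqrt 5 + 1) / 2

/-- β = φ^(φ+2) -/
noncomputable def goldBeta : ℝ := goldPhi ^ (goldPhi + 2)

/-- α = φ^(2φ-1) -/
noncomputable def goldAlpha : ℝ := goldPhi ^ (2 * goldPhi - 1)

namespace BTree

variable {α : Type} [LinearOrder α]

/-- p(t,u) = max(log_β (β·s(u)/(s(t)+s(u))), 0) -/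
noncomputable def p (t u : BTree α) : ℝ :=
  max (Real.logb goldBeta (goldBeta * (s u : ℝ) / ((s t : ℝ) + (s u : ℝ)))) 0

/-- the potential function Φ(⟨⟩) = 0, Φ(⟨t,a,u⟩) = Φ(t) + p(t,u) + Φ(u) -/
noncomputable def Phi : BTree α → ℝ
  | nil => 0
  | node t _ u => Phi t + p t u + Phi u

end BTree

open Real

lemma goldPhi_eq_goldenRatio : goldPhi = goldenRatio := by
  rw [goldPhi, goldenRatio]; ring

lemma goldPhi_pos : 0 < goldPhi := goldPhi_eq_goldenRatio ▸ goldenRatio_pos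

lemma one_lt_goldPhi : 1 < goldPhi := goldPhi_eq_goldenRatio ▸ one_lt_goldenRatio

lemma goldPhi_sq : goldPhi ^ 2 = goldPhi + 1 := goldPhi_eq_goldenRatio ▸ goldenRatio_sq

lemma goldBeta_eq : goldBeta = goldPhi ^ goldPhi * goldPhi ^ 2 := by
  rw [goldBeta, rpow_add goldPhi_pos]; norm_cast

lemma one_lt_goldBeta : 1 < goldBeta :=
  one_lt_rpow one_lt_goldPhi (by linarith [goldPhi_pos])

lemma goldBeta_pos : 0 < goldBeta := zero_lt_one.trans one_lt_goldBeta

lemma logb_goldPhi_eq (z : ℝ) : logb goldPhi z = (goldPhi + 2) * logb goldBeta z := by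
  have hlog : log goldPhi ≠ 0 := (log_pos one_lt_goldPhi).ne'
  have hexp : goldPhi + 2 ≠ 0 := by linarith [goldPhi_pos]
  rw [logb, logb, goldBeta, log_rpow goldPhi_pos]
  field_simp

lemma goldBeta_mul_mul_one_sub_rpow_le_one {r : ℝ} (h0 : 0 ≤ r) (h1 : r ≤ 1) :
    goldBeta * r * (1 - r) ^ goldPhi ≤ 1 := by
  have hφ := goldPhi_pos
  have h1r : 0 ≤ 1 - r := sub_nonneg.mpr h1
  have hweights : (goldPhi ^ 2)⁻¹ + goldPhi⁻¹ = 1 := by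
    field_simp; linarith [goldPhi_sq]
  have amgm := geom_mean_le_arith_mean2_weighted (by positivity) (by positivity)
    (by positivity : 0 ≤ goldPhi ^ 2 * r) (mul_nonneg hφ.le h1r) hweights
  have hmean : (goldPhi ^ 2)⁻¹ * (goldPhi ^ 2 * r) + goldPhi⁻¹ * (goldPhi * (1 - r)) = 1 := by
    field_simp; ring
  rw [hmean] at amgm
  have hpow := rpow_le_one (by positivity) amgm (by positivity : (0 : ℝ) ≤ goldPhi ^ 2)
  have hexp : goldPhi⁻¹ * goldPhi ^ 2 = goldPhi := by field_simp
  rw [mul_rpow (by positivity) (by positivity), ← rpow_mul (by positivity),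
    ← rpow_mul (mul_nonneg hφ.le h1r), inv_mul_cancel₀ (by positivity), rpow_one, hexp,
    mul_rpow hφ.le h1r] at hpow
  calc goldBeta * r * (1 - r) ^ goldPhi
      = goldPhi ^ 2 * r * (goldPhi ^ goldPhi * (1 - r) ^ goldPhi) := by rw [goldBeta_eq]; ring
    _ ≤ 1 := hpow

lemma logb_goldBeta_mul_div_le {a b : ℝ} (ha : 0 < a) (hb : 0 < b) :
    logb goldBeta (goldBeta * a / (a + b)) ≤
      goldPhi * (logb goldBeta (a + b) - logb goldBeta b) := by
  have hab : 0 < a + b := by linarith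
  have hr : 1 - a / (a + b) = b / (a + b) := by field_simp; ring
  have key := goldBeta_mul_mul_one_sub_rpow_le_one (r := a / (a + b)) (by positivity)
    ((div_le_one hab).mpr (by linarith))
  rw [hr] at key
  have hlog := logb_nonpos one_lt_goldBeta
    (mul_nonneg (mul_nonneg goldBeta_pos.le (by positivity)) (by positivity)) key
  rw [logb_mul (mul_pos goldBeta_pos (by positivity)).ne' (by positivity),
    logb_rpow_eq_mul_logb_of_pos (by positivity),
    logb_div hb.ne' hab.ne'] at hlog
  rw [mul_div_assoc]
  linarith

noncomputable def mergeCostBound (m n : ℝ) : ℝ :=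
  logb goldBeta m + logb goldBeta n + goldPhi * logb goldBeta (m + n - 1)

lemma mergeCostBound_comm (m n : ℝ) : mergeCostBound m n = mergeCostBound n m := by
  rw [mergeCostBound, mergeCostBound, add_comm m n]; ring

lemma mergeCostBound_le_logb_goldPhi {m n : ℝ} (hm : 1 ≤ m) (hn : 1 ≤ n) :
    mergeCostBound m n ≤ logb goldPhi (m + n) := by
  have mono : ∀ {z : ℝ}, 0 < z → z ≤ m + n → logb goldBeta z ≤ logb goldBeta (m + n) :=
    fun hz hle => logb_le_logb_of_le one_lt_goldBeta hz hle
  have hm' := mono (by linarith) (by linarith : m ≤ m + n)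
  have hn' := mono (by linarith) (by linarith : n ≤ m + n)
  have hmn := mul_le_mul_of_nonneg_left (mono (by linarith) (by linarith : m + n - 1 ≤ m + n))
    goldPhi_pos.le
  rw [mergeCostBound, logb_goldPhi_eq]
  linarith

namespace BTree

variable {α : Type}

lemma size_balW (x : BTree α) : size (balW x) = size x := by
  cases x with
  | nil => rfl
  | node t a u => simp only [balW]; split <;> simp only [size]; omega

lemma size_mergeW [LinearOrder α] (x y : BTree α) : size (mergeW x y) = size x + size y := by
  induction x, y using mergeW.induct with
  | case1 => simp [mergeW, size]
  | case2 v b w ih => simp only [mergeW, size_balW, size, ih]; omega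
  | case3 t a u ih => simp only [mergeW, size_balW, size, ih]; omega
  | case4 t a u v b w hab ih => simp only [mergeW, if_pos hab, size_balW, size, ih]; omega
  | case5 t a u v b w hab ih => simp only [mergeW, if_neg hab, size_balW, size, ih]; omega

lemma one_le_s (x : BTree α) : (1 : ℝ) ≤ s x := by
  simp [s]

lemma s_pos (x : BTree α) : (0 : ℝ) < s x := zero_lt_one.trans_le (one_le_s x)

lemma s_node (t : BTree α) (a : α) (u : BTree α) :
    (s (node t a u) : ℝ) = s t + s u := by
  simp only [s, size]; push_cast; ring

lemma p_nonneg (t u : BTree α) : 0 ≤ p t u := le_max_right _ _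

lemma one_le_p_add_logb_sub (t u : BTree α) :
    1 ≤ p t u + logb goldBeta (s t + s u) - logb goldBeta (s u) := by
  have ht := s_pos t
  have hu := s_pos u
  have hlog : logb goldBeta (goldBeta * s u / (s t + s u))
      = 1 + logb goldBeta (s u) - logb goldBeta (s t + s u) := by
    rw [logb_div (mul_pos goldBeta_pos hu).ne' (by linarith), logb_mul goldBeta_pos.ne' hu.ne',
      logb_self_eq_one one_lt_goldBeta]
  have := le_max_left (logb goldBeta (goldBeta * s u / (s t + s u))) 0
  rw [p]
  linarith

lemma p_swap_le (t u : BTree α) :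
    p u t ≤ goldPhi * (logb goldBeta (s t + s u) - logb goldBeta (s u)) := by
  have ht := s_pos t
  have hu := s_pos u
  have hgap : 0 ≤ logb goldBeta (s t + s u) - logb goldBeta (s u) :=
    sub_nonneg.mpr (logb_le_logb_of_le one_lt_goldBeta hu (by linarith))
  rw [p, add_comm (s u : ℝ)]
  exact max_le (logb_goldBeta_mul_div_le ht hu) (mul_nonneg goldPhi_pos.le hgap)

lemma p_le_p_swap {t u : BTree α} (h : s u ≤ s t) : p t u ≤ p u t := by
  have hβ := goldBeta_pos
  have hu := s_pos u
  rw [p, p, add_comm (s u : ℝ)]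
  gcongr max (logb goldBeta (goldBeta * ?_ / _)) 0
  · exact one_lt_goldBeta
  · exact_mod_cast h

lemma Phi_balW_le (t : BTree α) (a : α) (z : BTree α) :
    Phi (balW (node t a z)) ≤
      Phi t + Phi z + goldPhi * (logb goldBeta (s t + s z) - logb goldBeta (s z)) := by
  rw [balW]
  split_ifs with h
  · have hs : s z ≤ s t := by simp only [s]; omega
    have := (p_le_p_swap hs).trans (p_swap_le t z)
    rw [Phi]
    linarith
  · have := p_swap_le t z
    rw [Phi]
    linarith

lemma amortized_step_left_le {t u y z : BTree α} (a : α) {c : ℝ}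
    (hz : size z = size u + size y)
    (ih : c + Phi z - Phi u - Phi y ≤ mergeCostBound (s u) (s y)) :
    c + 1 + Phi (balW (node t a z)) - Phi (node t a u) - Phi y ≤
      mergeCostBound (s (node t a u)) (s y) := by
  have hsz : (s z : ℝ) = s u + s y - 1 := by simp only [s, hz]; push_cast; ring
  have hbal := Phi_balW_le t a z
  have hp := one_le_p_add_logb_sub t u
  rw [hsz, show (s t : ℝ) + (s u + s y - 1) = s t + s u + s y - 1 by ring] at hbal
  rw [mergeCostBound] at ih ⊢
  rw [s_node, Phi]
  linarith

lemma amortized_step_right_le {x v w z : BTree α} (b : α) {c : ℝ}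
    (hz : size z = size x + size w)
    (ih : c + Phi z - Phi x - Phi w ≤ mergeCostBound (s x) (s w)) :
    c + 1 + Phi (balW (node v b z)) - Phi x - Phi (node v b w) ≤
      mergeCostBound (s x) (s (node v b w)) := by
  rw [mergeCostBound_comm] at ih ⊢
  have := amortized_step_left_le (t := v) (c := c) b (hz.trans (add_comm _ _)) (by linarith)
  linarith

lemma amortized_mergeW_le [LinearOrder α] (x y : BTree α) :
    cost x y + Phi (mergeW x y) - Phi x - Phi y ≤ mergeCostBound (s x) (s y) := by
  induction x, y using mergeW.induct with
  | case1 => simp [mergeW, cost, Phi, mergeCostBound, s, size]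
  | case2 v b w ih =>
    simp only [mergeW, cost]; push_cast
    exact amortized_step_right_le b (size_mergeW _ _) ih
  | case3 t a u ih =>
    simp only [mergeW, cost]; push_cast
    exact amortized_step_left_le a (size_mergeW _ _) ih
  | case4 t a u v b w hab ih =>
    simp only [mergeW, cost, if_pos hab]; push_cast
    exact amortized_step_left_le a (size_mergeW _ _) ih
  | case5 t a u v b w hab ih =>
    simp only [mergeW, cost, if_neg hab]; push_cast
    exact amortized_step_right_le b (size_mergeW _ _) ih

end BTree

open BTree in
theorem amortized_union_deleteMin_weightBiased (α : Type) [LinearOrder α] :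
    (∀ x y : BTree α, IsHeap x → WeightLeftist x → IsHeap y → WeightLeftist y →
      (cost x y : ℝ) + Phi (mergeW x y) - Phi x - Phi y
        ≤ Real.logb goldPhi ((s x : ℝ) + (s y : ℝ))) ∧
    (∀ (t : BTree α) (a : α) (u : BTree α),
      IsHeap (node t a u) → WeightLeftist (node t a u) →
      (cost t u : ℝ) + Phi (mergeW t u) - Phi (node t a u)
        ≤ Real.logb goldPhi (s (node t a u))) := by
  have union (x y : BTree α) :
      (cost x y : ℝ) + Phi (mergeW x y) - Phi x - Phi y ≤ logb goldPhi ((s x : ℝ) + s y) :=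
    (amortized_mergeW_le x y).trans (mergeCostBound_le_logb_goldPhi (one_le_s x) (one_le_s y))
  refine ⟨fun x y _ _ _ _ => union x y, fun t a u _ _ => ?_⟩
  have := union t u
  have := p_nonneg t u
  rw [s_node, Phi]
  linarith
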